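/- arXiv:2505.13224 — 6 statements merged into one kernel-verified Lean document; each statement's English description precedes it below -/
import Mathlib

section
/- Let $V$ be a finite-dimensional real vector space, $\Theta \in \Lambda^n V^*$ and suppose $\ker_1\Theta \cap \ker_1\Omega = \{0\}$ and $\ker_1\Omega \neq \{0\}$, where $\Omega \in \Lambda^{n+1} V^*$, $\ker_1\Theta = \{v \in V : \iota_v\Theta = 0\}$ and $\ker_1\Omega = \{v \in V : \iota_v\Omega = 0\}$. Then the $(n+1)$-form on $V \times \mathbb{R}$ given by $\widetilde\Omega(v_0 \oplus \gamma_0, \dots, v_n \oplus \gamma_n) = -\sum_i (-1)^i \gamma_i\,\Theta(v_0,\dots,\widehat{v_i},\dots,v_n) + z\,\Omega(v_0,\dots,v_n)$ (for a fixed $z \neq 0$) is non-degenerate: if $\iota_{v\oplus\gamma}\widetilde\Omega = 0$ then $v = 0$ and $\gamma = 0$. -/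
/-!
STATEMENT 0 (pointwise content of Proposition 3.7, forward direction).

`Θ` is an `n`-form (here of degree `n+1`) on a finite-dimensional real vector
space `V`, `Ω` an `(n+1)`-form (here of degree `n+2`, playing the role of `dΘ`).
If `ker₁ Θ ∩ ker₁ Ω = {0}` and `ker₁ Ω ≠ {0}`, then the form `Ω̃` on `V × ℝ`
given (at height `z ≠ 0`) by
`Ω̃(v₀⊕γ₀,…) = -∑ᵢ (-1)ⁱ γᵢ Θ(v₀,…,v̂ᵢ,…) + z Ω(v₀,…)`
is non-degenerate.
-/
theorem stmt0
    (V : Type*) [AddCommGroup V] [Module ℝ V] [FiniteDimensional ℝ V] (n : ℕ)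
    (Θ : V [⋀^Fin (n + 1)]→ₗ[ℝ] ℝ) (Ω : V [⋀^Fin (n + 2)]→ₗ[ℝ] ℝ)
    (hker : ∀ v : V, Θ.curryLeft v = 0 → Ω.curryLeft v = 0 → v = 0)
    (hne : ∃ v : V, v ≠ 0 ∧ Ω.curryLeft v = 0)
    (z : ℝ) (hz : z ≠ 0)
    (Ωt : (V × ℝ) [⋀^Fin (n + 2)]→ₗ[ℝ] ℝ)
    (hΩt : ∀ w : Fin (n + 2) → V × ℝ,
      Ωt w = -(∑ i : Fin (n + 2), (-1 : ℝ) ^ (i : ℕ) * (w i).2 *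
          Θ (fun j => (w (i.succAbove j)).1))
        + z * Ω (fun i => (w i).1)) :
    ∀ (v : V) (γ : ℝ), Ωt.curryLeft (v, γ) = 0 → v = 0 ∧ γ = 0 := by
  intro v γ h
  have hcl : ∀ x : Fin (n+1) → V × ℝ, Ωt (Fin.cons (v, γ) x) = 0 := by
    intro x
    have := congrFun (congrArg DFunLike.coe h) x
    simpa [Matrix.vecCons] using this
  -- step 1
  have key1 : ∀ u : Fin (n+1) → V, -(γ * Θ u) + z * Ω (Fin.cons v u) = 0 := by
    intro u
    have h0 := hcl (fun i => (u i, 0))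
    rw [hΩt] at h0
    have hΩarg : (fun i => ((Fin.cons (v,γ) (fun i => (u i, (0:ℝ))) :
        Fin (n+2) → V × ℝ) i).1) = Fin.cons v u := by
      funext i
      refine Fin.cases ?_ (fun i => ?_) i <;> simp
    rw [hΩarg, Fin.sum_univ_succ] at h0
    simpa [Fin.succAbove] using h0
  -- step 2 : ι_v Θ = 0
  have keyΘ : Θ.curryLeft v = 0 := by
    ext u
    set w : Fin (n+2) → V × ℝ :=
      Fin.cons (v,γ) (Fin.cons ((0:V),(1:ℝ)) (fun i => (u i, (0:ℝ)))) with hw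
    have h0 := hcl (Fin.cons ((0:V),(1:ℝ)) (fun i => (u i, (0:ℝ))))
    rw [← hw, hΩt] at h0
    have hΩarg : (fun i => (w i).1) = Fin.cons v (Fin.cons 0 u) := by
      funext i
      refine Fin.cases ?_ (fun i => Fin.cases ?_ (fun i => ?_) i) i <;> simp [hw]
    have hA0 : (fun j => (w (Fin.succAbove 0 j)).1) = Fin.cons 0 u := by
      funext j
      refine Fin.cases ?_ (fun j => ?_) j <;> simp [hw, Fin.succAbove]
    have hA1 : (fun j => (w (Fin.succAbove 1 j)).1) = Fin.cons v u := by
      funext j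
      refine Fin.cases ?_ (fun j => ?_) j <;>
        simp [hw, Fin.succAbove, Fin.lt_iff_val_lt_val]
    rw [hΩarg, Fin.sum_univ_succ, Fin.sum_univ_succ] at h0
    rw [show ((0:Fin (n+2)).succAbove) = Fin.succAbove 0 from rfl] at h0
    have hz1 : Θ (Fin.cons (0:V) u) = 0 := Θ.map_coord_zero 0 (by simp)
    have hz2 : Ω (Fin.cons v (Fin.cons 0 u)) = 0 := by
      refine Ω.map_coord_zero 1 ?_
      show (Fin.cons v (Fin.cons (0:V) u) : Fin (n+2) → V) (Fin.succ 0) = 0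
      simp
    rw [show ((Fin.succ 0 : Fin (n+2)).succAbove) = Fin.succAbove 1 from rfl] at h0
    rw [hA0, hA1, hz1, hz2] at h0
    have htail : ∀ i : Fin n, (w i.succ.succ).2 = 0 := by
      intro i; simp [hw]
    simp only [Fin.cons_zero, Fin.cons_succ, hw] at h0 htail
    have h0' : Θ (Fin.cons v u) = 0 := by
      simp only [Fin.val_zero, pow_zero, one_mul, Fin.val_succ, mul_zero,
        zero_mul, Finset.sum_const_zero, add_zero, mul_one] at h0
      simp at h0
      linarith
    show Θ (Fin.cons v u) = 0
    exact h0'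
  -- kernel vector of Ω
  obtain ⟨p, hp, hpΩ⟩ := hne
  have hpΩ' : ∀ x : Fin (n+1) → V, Ω (Fin.cons p x) = 0 := by
    intro x
    have := congrFun (congrArg DFunLike.coe hpΩ) x
    simpa [Matrix.vecCons] using this
  -- swap identity
  have hswap : ∀ u' : Fin n → V,
      Ω (Fin.cons v (Fin.cons p u')) = - Ω (Fin.cons p (Fin.cons v u')) := by
    intro u'
    have h01 : (0 : Fin (n+2)) ≠ 1 := by
      simp [Fin.ext_iff]
    have hfe : (Fin.cons p (Fin.cons v u') ∘ Equiv.swap (0 : Fin (n+2)) 1)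
        = Fin.cons v (Fin.cons p u') := by
      funext i
      refine Fin.cases ?_ (fun i => Fin.cases ?_ (fun i => ?_) i) i
      · have hs : Equiv.swap (0 : Fin (n+2)) 1 0 = 1 := Equiv.swap_apply_left 0 1
        simp only [Function.comp_apply, hs, Fin.cons_zero]
        show (Fin.cons p (Fin.cons v u') : Fin (n+2) → V) (Fin.succ 0) = v
        simp
      · have : Equiv.swap (0 : Fin (n+2)) 1 (Fin.succ 0) = 0 := by
          show Equiv.swap (0 : Fin (n+2)) 1 1 = 0
          simp [Equiv.swap_apply_right]
        simp [this]
      · have h2 : (i.succ.succ : Fin (n+2)) ≠ 0 := Fin.succ_ne_zero _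
        have h3 : (i.succ.succ : Fin (n+2)) ≠ 1 := by
          simp [Fin.ext_iff]
        simp [Equiv.swap_apply_of_ne_of_ne h2 h3]
    have := Ω.map_swap (Fin.cons p (Fin.cons v u')) h01
    rw [hfe] at this
    exact this
  -- γ = 0
  have hγ : γ = 0 := by
    by_contra hγ
    have hΘp : Θ.curryLeft p = 0 := by
      ext u'
      have h1 := key1 (Fin.cons p u')
      rw [hswap u', hpΩ' (Fin.cons v u')] at h1
      have h2 : γ * Θ (Fin.cons p u') = 0 := by linarith
      rcases mul_eq_zero.mp h2 with h3 | h3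
      · exact absurd h3 hγ
      · show Θ (Fin.cons p u') = 0
        exact h3
    exact hp (hker p hΘp hpΩ)
  subst hγ
  have hΩv : Ω.curryLeft v = 0 := by
    ext u
    have h1 := key1 u
    simp only [zero_mul, neg_zero, zero_add] at h1
    rcases mul_eq_zero.mp h1 with h3 | h3
    · exact absurd h3 hz
    · show Ω (Fin.cons v u) = 0
      exact h3
  exact ⟨hker v keyΘ hΩv, rfl⟩
end

section
/- Let $V$ be a finite-dimensional real vector space, $\Theta \in \Lambda^n V^*$ and $\Omega \in \Lambda^{n+1} V^*$ with $\ker_1\Omega \neq \{0\}$. If for some fixed $z \neq 0$ the $(n+1)$-form $\widetilde\Omega$ on $V \times \mathbb{R}$ defined by $\widetilde\Omega(v_0\oplus\gamma_0,\dots,v_n\oplus\gamma_n) = -\sum_i(-1)^i\gamma_i\,\Theta(v_0,\dots,\widehat{v_i},\dots,v_n) + z\,\Omega(v_0,\dots,v_n)$ is non-degenerate, then $\ker_1\Theta \cap \ker_1\Omega = \{0\}$. -/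
/-!
STATEMENT 1 (pointwise content of Proposition 3.7, converse direction).

If `ker₁ Ω ≠ {0}` and, for some `z ≠ 0`, the form `Ω̃` on `V × ℝ` defined by
`Ω̃(v₀⊕γ₀,…) = -∑ᵢ (-1)ⁱ γᵢ Θ(v₀,…,v̂ᵢ,…) + z Ω(v₀,…)` is non-degenerate,
then `ker₁ Θ ∩ ker₁ Ω = {0}`.  Here `Θ` has degree `n+1` and `Ω` degree `n+2`.
-/
theorem stmt1
    (V : Type*) [AddCommGroup V] [Module ℝ V] [FiniteDimensional ℝ V] (n : ℕ)
    (Θ : V [⋀^Fin (n + 1)]→ₗ[ℝ] ℝ) (Ω : V [⋀^Fin (n + 2)]→ₗ[ℝ] ℝ)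
    (hne : ∃ v : V, v ≠ 0 ∧ Ω.curryLeft v = 0)
    (z : ℝ) (hz : z ≠ 0)
    (Ωt : (V × ℝ) [⋀^Fin (n + 2)]→ₗ[ℝ] ℝ)
    (hΩt : ∀ w : Fin (n + 2) → V × ℝ,
      Ωt w = -(∑ i : Fin (n + 2), (-1 : ℝ) ^ (i : ℕ) * (w i).2 *
          Θ (fun j => (w (i.succAbove j)).1))
        + z * Ω (fun i => (w i).1))
    (hnondeg : ∀ (v : V) (γ : ℝ), Ωt.curryLeft (v, γ) = 0 → v = 0 ∧ γ = 0) :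
    ∀ v : V, Θ.curryLeft v = 0 → Ω.curryLeft v = 0 → v = 0 := by
  intro v hΘ hΩ
  refine (hnondeg v 0 ?_).1
  ext w
  simp only [AlternatingMap.curryLeft_apply_apply, AlternatingMap.zero_apply]
  rw [hΩt]
  have hΩ' : Ω (fun i => (Matrix.vecCons (v, (0:ℝ)) w i).1) = 0 := by
    have h1 : (fun i => (Matrix.vecCons (v, (0:ℝ)) w i).1)
        = Matrix.vecCons v (fun j => (w j).1) := by
      funext i
      refine Fin.cases ?_ (fun j => ?_) i <;> simp
    rw [h1]
    have := DFunLike.congr_fun hΩ (fun j => (w j).1)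
    simpa using this
  have hsum : (∑ i : Fin (n + 2), (-1 : ℝ) ^ (i : ℕ) *
      (Matrix.vecCons (v, (0:ℝ)) w i).2 *
      Θ (fun j => (Matrix.vecCons (v, (0:ℝ)) w (i.succAbove j)).1)) = 0 := by
    rw [Fin.sum_univ_succ]
    have h0 : ((Matrix.vecCons (v, (0:ℝ)) w 0).2 : ℝ) = 0 := rfl
    rw [h0]
    simp only [mul_zero, zero_mul, zero_add]
    refine Finset.sum_eq_zero fun i _ => ?_
    have harg : (fun j => (Matrix.vecCons (v, (0:ℝ)) w ((Fin.succ i).succAbove j)).1)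
        = Matrix.vecCons v (fun m => (w (i.succAbove m)).1) := by
      funext j
      refine Fin.cases ?_ (fun m => ?_) j
      · rw [Fin.succ_succAbove_zero]; rfl
      · rw [Fin.succ_succAbove_succ]; rfl
    rw [harg]
    have := DFunLike.congr_fun hΘ (fun m => (w (i.succAbove m)).1)
    simp only [AlternatingMap.curryLeft_apply_apply, AlternatingMap.zero_apply] at this
    rw [this, mul_zero]
  rw [hsum, hΩ', neg_zero, mul_zero, zero_add]
end

section
/- Let $V$ be a finite-dimensional real vector space, $\Theta \in \Lambda^n V^*$, $\Omega \in \Lambda^{n+1} V^*$ (playing the role of $d\Theta$) with $\ker_1\Theta \cap \ker_1\Omega = \{0\}$ and $\ker_1\Omega \neq \{0\}$. If $X \in V$ and $\gamma \in \mathbb{R}$ satisfy $\iota_X\Theta = 0$ and $\iota_X\Omega = \gamma\,\Theta$, then $\gamma = 0$ and $X = 0$. -/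
namespace AlternatingMap

variable {R M N : Type*} [CommRing R] [AddCommGroup M] [Module R M] [AddCommGroup N] [Module R N]

/-- Polarization of `curryLeft_same` at `x + y`. -/
theorem curryLeft_curryLeft_swap {n : ℕ} (f : M [⋀^Fin (n + 2)]→ₗ[R] N) (x y : M) :
    (f.curryLeft x).curryLeft y = -(f.curryLeft y).curryLeft x := by
  have h := f.curryLeft_same (x + y)
  simp only [map_add, curryLeft_add, LinearMap.add_apply, curryLeft_same, zero_add, add_zero] at h
  exact eq_neg_of_add_eq_zero_right h

end AlternatingMap

theorem stmt5_general
    (V : Type*) [AddCommGroup V] [Module ℝ V] (n : ℕ)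
    (Θ : V [⋀^Fin (n + 1)]→ₗ[ℝ] ℝ) (Ω : V [⋀^Fin (n + 2)]→ₗ[ℝ] ℝ)
    (hker : ∀ v : V, Θ.curryLeft v = 0 → Ω.curryLeft v = 0 → v = 0)
    (hne : ∃ v : V, v ≠ 0 ∧ Ω.curryLeft v = 0)
    (X : V) (γ : ℝ)
    (hXΘ : Θ.curryLeft X = 0)
    (hXΩ : Ω.curryLeft X = γ • Θ) :
    γ = 0 ∧ X = 0 := by
  obtain ⟨Y, hY0, hYΩ⟩ := hne
  have hYΘ : Θ.curryLeft Y ≠ 0 := fun h => hY0 (hker Y h hYΩ)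
  have hγΘY : γ • Θ.curryLeft Y = 0 := calc
    γ • Θ.curryLeft Y = (Ω.curryLeft X).curryLeft Y := by
      rw [hXΩ, AlternatingMap.curryLeft_smul, LinearMap.smul_apply]
    _ = 0 := by
      rw [AlternatingMap.curryLeft_curryLeft_swap, hYΩ, AlternatingMap.curryLeft_zero,
        LinearMap.zero_apply, neg_zero]
  have hγ : γ = 0 := (smul_eq_zero.mp hγΘY).resolve_right hYΘ
  exact ⟨hγ, hker X hXΘ (by rw [hXΩ, hγ, zero_smul])⟩

theorem stmt5
    (V : Type*) [AddCommGroup V] [Module ℝ V] [FiniteDimensional ℝ V] (n : ℕ)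
    (Θ : V [⋀^Fin (n + 1)]→ₗ[ℝ] ℝ) (Ω : V [⋀^Fin (n + 2)]→ₗ[ℝ] ℝ)
    (hker : ∀ v : V, Θ.curryLeft v = 0 → Ω.curryLeft v = 0 → v = 0)
    (hne : ∃ v : V, v ≠ 0 ∧ Ω.curryLeft v = 0)
    (X : V) (γ : ℝ)
    (hXΘ : Θ.curryLeft X = 0)
    (hXΩ : Ω.curryLeft X = γ • Θ) :
    γ = 0 ∧ X = 0 :=
  stmt5_general V n Θ Ω hker hne X γ hXΘ hXΩ
end

section
/- Let $V$ be a finite-dimensional real vector space, $\Theta \in \Lambda^n V^*$, $\Omega \in \Lambda^{n+1} V^*$, and suppose $\sharp : Z \to V$ and $\mathcal{R} : Z \to \mathbb{R}$ are linear maps on a subspace $Z \subseteq \Lambda^n V^*$ satisfying, for all $\alpha \in Z$: $\iota_{\sharp(\alpha)}\Theta = 0$ and $\iota_{\sharp(\alpha)}\Omega = \alpha + \mathcal{R}(\alpha)\,\Theta$. Then $\sharp$ is skew-symmetric: for all $\alpha, \beta \in Z$, $\iota_{\sharp(\alpha)}\beta = -\iota_{\sharp(\beta)}\alpha$. -/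
/-!
STATEMENT 6 (Lemma 4.4, pointwise): skew-symmetry of the `♯` mapping.

`Θ` an `n`-form (degree `n+1` here), `Ω` an `(n+1)`-form (degree `n+2`),
`Z ⊆ ΛⁿV*` a subspace, `♯ : Z → V` and `𝓡 : Z → ℝ` linear with
`ι_{♯α} Θ = 0` and `ι_{♯α} Ω = α + 𝓡(α)·Θ` for all `α ∈ Z`.  Then
`ι_{♯α} β = -ι_{♯β} α` for all `α, β ∈ Z`.
-/
theorem stmt6
    (V : Type*) [AddCommGroup V] [Module ℝ V] [FiniteDimensional ℝ V] (n : ℕ)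
    (Θ : V [⋀^Fin (n + 1)]→ₗ[ℝ] ℝ) (Ω : V [⋀^Fin (n + 2)]→ₗ[ℝ] ℝ)
    (Z : Submodule ℝ (V [⋀^Fin (n + 1)]→ₗ[ℝ] ℝ))
    (sharp : Z →ₗ[ℝ] V) (Reeb : Z →ₗ[ℝ] ℝ)
    (hΘ : ∀ α : Z, Θ.curryLeft (sharp α) = 0)
    (hΩ : ∀ α : Z, Ω.curryLeft (sharp α) = (α : V [⋀^Fin (n + 1)]→ₗ[ℝ] ℝ) + Reeb α • Θ) :
    ∀ α β : Z, (β : V [⋀^Fin (n + 1)]→ₗ[ℝ] ℝ).curryLeft (sharp α)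
      = -((α : V [⋀^Fin (n + 1)]→ₗ[ℝ] ℝ).curryLeft (sharp β)) := by
  intro α β
  have key : ∀ x y : V, (Ω.curryLeft x).curryLeft y = -((Ω.curryLeft y).curryLeft x) := by
    intro x y
    ext v
    have h : (Matrix.vecCons x (Matrix.vecCons y v)) ∘ Equiv.swap (0 : Fin (n+2)) 1
        = Matrix.vecCons y (Matrix.vecCons x v) := by
      funext i
      refine Fin.cases ?_ (fun j => Fin.cases ?_ (fun k => ?_) j) i
      · simp
      · simp
      · have h1 : (k.succ.succ : Fin (n+2)) ≠ 0 := Fin.succ_ne_zero _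
        have h2 : (k.succ.succ : Fin (n+2)) ≠ 1 := by
          simpa using (Fin.succ_injective _).ne_iff.mpr (Fin.succ_ne_zero k)
        simp [Equiv.swap_apply_of_ne_of_ne h1 h2]
    have hsw := Ω.map_swap (Matrix.vecCons x (Matrix.vecCons y v))
      (i := (0 : Fin (n+2))) (j := 1) (by simp)
    rw [h] at hsw
    simp only [AlternatingMap.curryLeft_apply_apply, AlternatingMap.neg_apply]
    linarith [hsw]
  have hβ : (β : V [⋀^Fin (n + 1)]→ₗ[ℝ] ℝ).curryLeft (sharp α)
      = (Ω.curryLeft (sharp β)).curryLeft (sharp α) := by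
    rw [hΩ β]
    simp [hΘ α]
  have hα : (α : V [⋀^Fin (n + 1)]→ₗ[ℝ] ℝ).curryLeft (sharp β)
      = (Ω.curryLeft (sharp α)).curryLeft (sharp β) := by
    rw [hΩ α]
    simp [hΘ β]
  rw [hβ, hα, key]
end

section
/- Let $M$ be a smooth manifold, $\Theta \in \Omega^n(M)$, and let $\alpha, \beta$ be $(n-1)$-forms with vector fields $X_\alpha, X_\beta$ and functions $g_\alpha, g_\beta$ satisfying $\iota_{X_\alpha}\Theta = -\alpha$, $\mathcal{L}_{X_\alpha}\Theta = g_\alpha\Theta$, $\iota_{X_\beta}\Theta = -\beta$, $\mathcal{L}_{X_\beta}\Theta = g_\beta\Theta$. Then $-\iota_{[X_\alpha, X_\beta]}\Theta = \mathcal{L}_{X_\alpha}\beta - g_\alpha\,\beta$. In particular, the form $-\iota_{[X_\alpha,X_\beta]}\Theta$ does not depend on the choice of $X_\beta$ and $g_\beta$ satisfying the above conditions. -/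
/-- An abstract Cartan calculus, modelling the differential calculus of a
smooth manifold: `C` is the ring of smooth functions, `V` the `C`-module of
vector fields, `F n` the `C`-module of differential `n`-forms, together with
the Lie bracket `lie` of vector fields, the action `act X f = X(f)` of vector
fields on functions, the Lie derivative `L`, the exterior derivative `d`
(with `d0` the differential of functions), the interior product `ι`, the wedge
product `wedge1` of a 1-form with a form, and the pairing `pair α X = α(X)` of
1-forms with vector fields.  The axioms are the standard identities of Cartan
calculus used in the paper. -/
structure CartanCalculus (C V : Type*) (F : ℕ → Type*) [CommRing C]
    [AddCommGroup V] [Module C V]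
    [∀ n, AddCommGroup (F n)] [∀ n, Module C (F n)] where
  lie : V → V → V
  act : V → C → C
  L : ∀ {n : ℕ}, V → F n → F n
  d : ∀ {n : ℕ}, F n → F (n + 1)
  d0 : C → F 1
  ι : ∀ {n : ℕ}, V → F (n + 1) → F n
  wedge1 : ∀ {n : ℕ}, F 1 → F n → F (n + 1)
  pair : F 1 → V → C
  act_lie : ∀ (X Y : V) (f : C),
    act (lie X Y) f = act X (act Y f) - act Y (act X f)
  L_lie : ∀ {n : ℕ} (X Y : V) (ω : F n),
    L (lie X Y) ω = L X (L Y ω) - L Y (L X ω)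
  L_add : ∀ {n : ℕ} (X : V) (ω τ : F n), L X (ω + τ) = L X ω + L X τ
  L_smul : ∀ {n : ℕ} (X : V) (f : C) (ω : F n),
    L X (f • ω) = act X f • ω + f • L X ω
  cartan : ∀ {n : ℕ} (X : V) (ω : F (n + 1)),
    L X ω = ι X (d ω) + d (ι X ω)
  cartan1 : ∀ (X : V) (ω : F 1), L X ω = ι X (d ω) + d0 (pair ω X)
  ι_lie : ∀ {n : ℕ} (X Y : V) (ω : F (n + 1)),
    ι (lie X Y) ω = L X (ι Y ω) - ι Y (L X ω)
  ι_addV : ∀ {n : ℕ} (X Y : V) (ω : F (n + 1)), ι (X + Y) ω = ι X ω + ι Y ω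
  ι_smulV : ∀ {n : ℕ} (f : C) (X : V) (ω : F (n + 1)), ι (f • X) ω = f • ι X ω
  ι_add : ∀ {n : ℕ} (X : V) (ω τ : F (n + 1)), ι X (ω + τ) = ι X ω + ι X τ
  ι_smul : ∀ {n : ℕ} (X : V) (f : C) (ω : F (n + 1)), ι X (f • ω) = f • ι X ω
  ι_ι_antisymm : ∀ {n : ℕ} (X Y : V) (ω : F (n + 2)),
    ι X (ι Y ω) = -ι Y (ι X ω)
  d_add : ∀ {n : ℕ} (ω τ : F n), d (ω + τ) = d ω + d τ
  d_d : ∀ {n : ℕ} (ω : F n), d (d ω) = 0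
  d0_add : ∀ f g : C, d0 (f + g) = d0 f + d0 g
  d_smul : ∀ {n : ℕ} (f : C) (ω : F n), d (f • ω) = wedge1 (d0 f) ω + f • d ω
  ι_wedge1 : ∀ {n : ℕ} (X : V) (α : F 1) (ω : F (n + 1)),
    ι X (wedge1 α ω) = pair α X • ω - wedge1 α (ι X ω)
  pair_d0 : ∀ (f : C) (X : V), pair (d0 f) X = act X f

/-!
STATEMENT 8 (case `p = q = 1` of Theorem 2.3): for an `n`-form `Θ` (of degree
`n+1` here, so the conformal Hamiltonian forms `α`, `β` have degree `n`), given
`ι_{X_α}Θ = -α`, `𝓛_{X_α}Θ = g_α Θ`, `ι_{X_β}Θ = -β`, `𝓛_{X_β}Θ = g_β Θ`,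
one has `-ι_{[X_α,X_β]}Θ = 𝓛_{X_α}β - g_α β`; in particular
`-ι_{[X_α,X_β]}Θ` does not depend on the choice of `X_β`, `g_β`. -/

lemma CartanCalculus.L_zero {C V : Type*} {F : ℕ → Type*} [CommRing C]
    [AddCommGroup V] [Module C V] [∀ n, AddCommGroup (F n)] [∀ n, Module C (F n)]
    (cc : CartanCalculus C V F) {n : ℕ} (X : V) : cc.L X (0 : F n) = 0 := by
  have h := cc.L_add X (0 : F n) 0
  simpa using h.symm

lemma CartanCalculus.L_neg {C V : Type*} {F : ℕ → Type*} [CommRing C]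
    [AddCommGroup V] [Module C V] [∀ n, AddCommGroup (F n)] [∀ n, Module C (F n)]
    (cc : CartanCalculus C V F) {n : ℕ} (X : V) (ω : F n) :
    cc.L X (-ω) = -cc.L X ω := by
  have h := cc.L_add X ω (-ω)
  rw [add_neg_cancel, cc.L_zero] at h
  exact eq_neg_of_add_eq_zero_right h.symm


theorem stmt8
    (C V : Type*) (F : ℕ → Type*) [CommRing C]
    [AddCommGroup V] [Module C V]
    [∀ n, AddCommGroup (F n)] [∀ n, Module C (F n)]
    (cc : CartanCalculus C V F) (n : ℕ)
    (Θ : F (n + 1)) (α β : F n) (Xα Xβ : V) (gα gβ : C)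
    (hXα : cc.ι Xα Θ = -α) (hLα : cc.L Xα Θ = gα • Θ)
    (hXβ : cc.ι Xβ Θ = -β) (hLβ : cc.L Xβ Θ = gβ • Θ) :
    -cc.ι (cc.lie Xα Xβ) Θ = cc.L Xα β - gα • β ∧
      ∀ (Xβ' : V) (gβ' : C), cc.ι Xβ' Θ = -β → cc.L Xβ' Θ = gβ' • Θ →
        cc.ι (cc.lie Xα Xβ) Θ = cc.ι (cc.lie Xα Xβ') Θ := by
  have key : cc.ι (cc.lie Xα Xβ) Θ = -(cc.L Xα β - gα • β) := by
    rw [cc.ι_lie, hXβ, cc.L_neg, hLα, cc.ι_smul, hXβ]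
    module
  constructor
  · rw [key, neg_neg]
  · intro Xβ' gβ' hXβ' hLβ'
    have key' : cc.ι (cc.lie Xα Xβ') Θ = -(cc.L Xα β - gα • β) := by
      rw [cc.ι_lie, hXβ', cc.L_neg, hLα, cc.ι_smul, hXβ']
      module
    rw [key, key']
end

section
/- Let $M$ be the manifold $\mathbb{R}^n \times \mathbb{R}^k \times \mathbb{R} \times \mathbb{R}^{nk} \times \mathbb{R}^n$ with coordinates $(x^\mu, y^i, p, p^\mu_i, s^\mu)$, and let $\Theta = ds^\mu \wedge d^{n-1}x_\mu - p\,d^n x - p^\mu_i\,dy^i\wedge d^{n-1}x_\mu$, where $d^n x = dx^1\wedge\cdots\wedge dx^n$ and $d^{n-1}x_\mu = \iota_{\partial/\partial x^\mu} d^n x$. Then $\ker_1 d\Theta = \mathrm{span}\{\partial/\partial s^\mu : \mu = 1,\dots,n\}$, where $\ker_1 d\Theta$ is the set of vector fields $X$ with $\iota_X d\Theta = 0$, and in particular $\ker_1\Theta \cap \ker_1 d\Theta = \{0\}$ and $\ker_1 d\Theta \neq \{0\}$ (so $\Theta$ is a multicontact form). -/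
/-!
STATEMENT 15 (Section 6): the canonical multicontact structure on the extended
phase space of action-dependent field theories, verified pointwise on the
tangent space `V = ℝⁿ × ℝᵏ × ℝ × ℝ^{nk} × ℝⁿ` (with `n = m + 1 ≥ 1`),
coordinates `(x^μ, y^i, p, p^μ_i, s^μ)`.

At a point with coordinate values `p₀`, `P₀`, the `n`-form
`Θ = ds^μ ∧ d^{n-1}x_μ - p dⁿx - p^μ_i dy^i ∧ d^{n-1}x_μ` and the
`(n+1)`-form `dΘ = -dp ∧ dⁿx - dp^μ_i ∧ dy^i ∧ d^{n-1}x_μ` are encoded by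
their evaluation on tuples of tangent vectors, expanding the wedge products by
determinants (`dⁿx = det` of the `x`-components, `d^{n-1}x_μ = ι_{∂/∂x^μ}dⁿx`).

The claims: `ker₁ dΘ = span{∂/∂s^μ}`, `ker₁ Θ ∩ ker₁ dΘ = {0}` and
`ker₁ dΘ ≠ {0}`, where `ι_u ω = 0` is expressed as the vanishing of `ω` on all
tuples having `u` in the first slot.
-/

/-- The tangent space `V = ℝⁿ × ℝᵏ × ℝ × ℝ^{n·k} × ℝⁿ`, with components
`(x, y, p, P, s)`. -/
abbrev PhSp (m k : ℕ) : Type :=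
  (Fin (m + 1) → ℝ) × (Fin k → ℝ) × ℝ × (Fin (m + 1) → Fin k → ℝ) × (Fin (m + 1) → ℝ)

/-- `dⁿx` evaluated on `n = m+1` tangent vectors: the determinant of the matrix
of their `x`-components (columns). -/
noncomputable def detX {m k : ℕ} (w : Fin (m + 1) → PhSp m k) : ℝ :=
  Matrix.det (Matrix.of fun r j => (w j).1 r)

/-- Evaluation of `Θ = ds^μ ∧ d^{n-1}x_μ - p dⁿx - p^μ_i dy^i ∧ d^{n-1}x_μ`
at a point with coordinate values `p₀`, `P₀`, on `n = m+1` tangent vectors: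
`∑ μ (ds^μ - P₀^μ_i dy^i) ∧ d^{n-1}x_μ` contributes, for each slot `i`, the
determinant of the `x`-column matrix with column `i` replaced by the vector
`(s(wᵢ)^μ - ∑_l P₀^μ_l y(wᵢ)^l)_μ`. -/
noncomputable def ThetaEval {m k : ℕ} (p₀ : ℝ) (P₀ : Fin (m + 1) → Fin k → ℝ)
    (w : Fin (m + 1) → PhSp m k) : ℝ :=
  (∑ i : Fin (m + 1), Matrix.det (Matrix.of fun r j =>
      if j = i then (w i).2.2.2.2 r - ∑ l : Fin k, P₀ r l * (w i).2.1 l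
      else (w j).1 r))
    - p₀ * detX w

/-- The `ℝⁿ`-valued pairing `(dp^μ_i ∧ dy^i)(u, u')` (index `μ`). -/
noncomputable def omega2 {m k : ℕ} (u u' : PhSp m k) : Fin (m + 1) → ℝ :=
  fun μ => ∑ l : Fin k, (u.2.2.2.1 μ l * u'.2.1 l - u'.2.2.2.1 μ l * u.2.1 l)

/-- Evaluation of `dΘ = -dp ∧ dⁿx - dp^μ_i ∧ dy^i ∧ d^{n-1}x_μ` on `n+1 = m+2`
tangent vectors, expanding the wedge products by the shuffle formula. -/
noncomputable def dThetaEval {m k : ℕ} (w : Fin (m + 2) → PhSp m k) : ℝ :=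
  -(∑ a : Fin (m + 2), (-1 : ℝ) ^ (a : ℕ) * (w a).2.2.1 *
      detX (fun j => w (a.succAbove j)))
  - ∑ a : Fin (m + 2), ∑ b : Fin (m + 1),
      (if (a : ℕ) ≤ (b : ℕ) then
        (-1 : ℝ) ^ ((a : ℕ) + (b : ℕ)) * Matrix.det (Matrix.of fun r (j : Fin (m + 1)) =>
          Fin.cases (omega2 (w a) (w (a.succAbove b)) r)
            (fun j' => (w (a.succAbove (b.succAbove j'))).1 r) j)
      else 0)

/-!
Contracting `dΘ` with `u` and then with `∂_p`, `∂_{p^0_i}` or `∂_{y^i}` followed by the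
`∂_{x^ν}` with `ν ≠ μ`, or with all the `∂_{x^ν}`, isolates, up to sign, the coordinate `x^μ`,
`y^i`, `p^μ_i` or `p` of `u`; so `ι_u dΘ = 0` forces all of them to vanish. Conversely every
term of `dΘ(u, …)` depends on `u` only through these coordinates. Once they vanish,
`Θ(u, ∂_{x^ν} (ν ≠ μ)) = ± s^μ(u)`, so `ι_u Θ = 0` also kills the `s`-components.
-/

namespace PhSp

variable {m k : ℕ}

def basisX (μ : Fin (m + 1)) : PhSp m k := (Pi.single μ 1, 0, 0, 0, 0)

def basisY (i : Fin k) : PhSp m k := (0, Pi.single i 1, 0, 0, 0)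

def basisP : PhSp m k := (0, 0, 1, 0, 0)

def basisPP (μ : Fin (m + 1)) (i : Fin k) : PhSp m k := (0, 0, 0, Pi.single μ (Pi.single i 1), 0)

def xFrame (μ : Fin (m + 1)) : Fin m → PhSp m k := fun j => basisX (μ.succAbove j)

end PhSp

open PhSp

theorem Matrix.det_eq_of_col_zero_of_succAbove_single {R : Type*} [CommRing R] {m : ℕ}
    (μ : Fin (m + 1)) (c : Fin (m + 1) → R) (M : Matrix (Fin (m + 1)) (Fin (m + 1)) R)
    (h0 : ∀ r, M r 0 = c r)
    (hsucc : ∀ r j, M r j.succ = Pi.single (M := fun _ => R) (μ.succAbove j) 1 r) :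
    M.det = (-1) ^ (μ : ℕ) * c μ := by
  rw [Matrix.det_succ_column_zero, Finset.sum_eq_single_of_mem μ (Finset.mem_univ _)]
  · have hminor : M.submatrix μ.succAbove Fin.succ = 1 := by
      ext r j
      simp [hsucc, Matrix.one_apply, Pi.single_apply]
    rw [h0, hminor, Matrix.det_one, mul_one]
  · intro i _ hi
    obtain ⟨j, hj⟩ := Fin.exists_succAbove_eq hi
    have hcol : (M.submatrix i.succAbove Fin.succ).det = 0 :=
      Matrix.det_eq_zero_of_column_eq_zero j fun r => by
        simp [hsucc, hj, Fin.succAbove_ne]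
    rw [hcol, mul_zero]

section Evaluations

variable {m k : ℕ}

theorem detX_eq_zero_of_fst_eq_zero {w : Fin (m + 1) → PhSp m k} (j : Fin (m + 1))
    (hj : (w j).1 = 0) : detX w = 0 :=
  Matrix.det_eq_zero_of_column_eq_zero j fun r => by simp [hj]

theorem detX_basisX : detX (basisX : Fin (m + 1) → PhSp m k) = 1 := by
  have hid : Matrix.of (fun r j => (basisX j : PhSp m k).1 r) = 1 := by
    ext r j
    simp [basisX, Matrix.one_apply, Pi.single_apply]
  rw [detX, hid, Matrix.det_one]

theorem detX_cons_xFrame (v : PhSp m k) (μ : Fin (m + 1)) :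
    detX (Fin.cons v (xFrame μ)) = (-1) ^ (μ : ℕ) * v.1 μ :=
  Matrix.det_eq_of_col_zero_of_succAbove_single μ v.1 _ (fun _ => rfl) (fun _ _ => rfl)

theorem omega2_eq_zero_of_right (u : PhSp m k) {v : PhSp m k} (hy : v.2.1 = 0)
    (hP : v.2.2.2.1 = 0) : omega2 u v = 0 := by
  funext μ
  simp [omega2, hy, hP]

theorem omega2_eq_zero_of_left {u : PhSp m k} (v : PhSp m k) (hy : u.2.1 = 0)
    (hP : u.2.2.2.1 = 0) : omega2 u v = 0 := by
  funext μ
  simp [omega2, hy, hP]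

theorem omega2_basisY (u : PhSp m k) (μ : Fin (m + 1)) (i : Fin k) :
    omega2 u (basisY i) μ = u.2.2.2.1 μ i := by
  simp [omega2, basisY, Pi.single_apply]

theorem omega2_basisPP (u : PhSp m k) (μ : Fin (m + 1)) (i : Fin k) :
    omega2 u (basisPP μ i) μ = -u.2.1 i := by
  simp [omega2, basisPP, Pi.single_apply]

/-- `(dp ∧ dⁿx)(w)`. -/
noncomputable def dpVolEval (w : Fin (m + 2) → PhSp m k) : ℝ :=
  ∑ a : Fin (m + 2), (-1 : ℝ) ^ (a : ℕ) * (w a).2.2.1 * detX (fun j => w (a.succAbove j))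

noncomputable def omegaMat (w : Fin (m + 2) → PhSp m k) (a : Fin (m + 2)) (b : Fin (m + 1)) :
    Matrix (Fin (m + 1)) (Fin (m + 1)) ℝ :=
  Matrix.of fun r j => Fin.cases (omega2 (w a) (w (a.succAbove b)) r)
    (fun j' => (w (a.succAbove (b.succAbove j'))).1 r) j

/-- `(dp^μ_i ∧ dy^i ∧ d^{n-1}x_μ)(w)`. -/
noncomputable def omegaVolEval (w : Fin (m + 2) → PhSp m k) : ℝ :=
  ∑ a : Fin (m + 2), ∑ b : Fin (m + 1),
    if (a : ℕ) ≤ (b : ℕ) then (-1 : ℝ) ^ ((a : ℕ) + (b : ℕ)) * (omegaMat w a b).det else 0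

theorem dThetaEval_eq (w : Fin (m + 2) → PhSp m k) :
    dThetaEval w = -dpVolEval w - omegaVolEval w :=
  rfl

theorem dpVolEval_eq_single {w : Fin (m + 2) → PhSp m k} (a₀ : Fin (m + 2))
    (h : ∀ a ≠ a₀, (w a).2.2.1 * detX (fun j => w (a.succAbove j)) = 0) :
    dpVolEval w = (-1) ^ (a₀ : ℕ) * (w a₀).2.2.1 * detX (fun j => w (a₀.succAbove j)) :=
  Finset.sum_eq_single_of_mem a₀ (Finset.mem_univ _) fun a _ ha => by
    rw [mul_assoc, h a ha, mul_zero]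

theorem omegaMat_det_eq_zero {w : Fin (m + 2) → PhSp m k} {a : Fin (m + 2)} {b : Fin (m + 1)}
    (h : omega2 (w a) (w (a.succAbove b)) = 0) : (omegaMat w a b).det = 0 :=
  Matrix.det_eq_zero_of_column_eq_zero 0 fun r => by simp [omegaMat, h]

theorem omegaVolEval_eq_of_tail {w : Fin (m + 2) → PhSp m k}
    (h : ∀ b : Fin (m + 1), b ≠ 0 → (w b.succ).2.1 = 0 ∧ (w b.succ).2.2.2.1 = 0) :
    omegaVolEval w = (omegaMat w 0 0).det := by
  have hterm : ∀ (a : Fin (m + 2)) (b : Fin (m + 1)), (a : ℕ) ≤ b → (a ≠ 0 ∨ b ≠ 0) →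
      (omegaMat w a b).det = 0 := by
    intro a b hab hne
    have hb : b ≠ 0 := by
      rintro rfl
      exact hne.elim (fun ha => ha (Fin.ext (by simpa using hab))) fun hb => hb rfl
    exact omegaMat_det_eq_zero (by
      rw [Fin.succAbove_of_le_castSucc a b (Fin.le_def.mpr (by simpa using hab))]
      exact omega2_eq_zero_of_right _ (h b hb).1 (h b hb).2)
  rw [omegaVolEval, Finset.sum_eq_single_of_mem 0 (Finset.mem_univ _),
    Finset.sum_eq_single_of_mem 0 (Finset.mem_univ _)]
  · simp
  · intro b _ hb
    rw [if_pos (by simp), hterm 0 b (by simp) (Or.inr hb), mul_zero]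
  · intro a _ ha
    refine Finset.sum_eq_zero fun b _ => ?_
    split_ifs with hab
    · rw [hterm a b hab (Or.inl ha), mul_zero]
    · rfl

theorem omegaVolEval_eq_zero_of_tail {w : Fin (m + 2) → PhSp m k}
    (h : ∀ b : Fin (m + 1), (w b.succ).2.1 = 0 ∧ (w b.succ).2.2.2.1 = 0) :
    omegaVolEval w = 0 := by
  rw [omegaVolEval_eq_of_tail fun b _ => h b]
  refine omegaMat_det_eq_zero ?_
  rw [Fin.zero_succAbove]
  exact omega2_eq_zero_of_right _ (h 0).1 (h 0).2

end Evaluations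

section Contractions

variable {m k : ℕ}

theorem dThetaEval_cons_basisX (u : PhSp m k) :
    dThetaEval (Fin.cons u basisX) = -u.2.2.1 := by
  have hdp : dpVolEval (Fin.cons u basisX : Fin (m + 2) → PhSp m k) = u.2.2.1 := by
    rw [dpVolEval_eq_single 0 fun a ha => ?_]
    · simp [Fin.zero_succAbove, detX_basisX]
    · obtain ⟨a, rfl⟩ := Fin.eq_succ_of_ne_zero ha
      simp [basisX]
  have hω : omegaVolEval (Fin.cons u basisX : Fin (m + 2) → PhSp m k) = 0 :=
    omegaVolEval_eq_zero_of_tail fun b => by simp [basisX]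
  rw [dThetaEval_eq, hdp, hω, sub_zero]

theorem dThetaEval_cons_basisP_xFrame (u : PhSp m k) (μ : Fin (m + 1)) :
    dThetaEval (Fin.cons u (Fin.cons basisP (xFrame μ))) = (-1) ^ (μ : ℕ) * u.1 μ := by
  set w : Fin (m + 2) → PhSp m k := Fin.cons u (Fin.cons basisP (xFrame μ))
  have hframe : (fun j => w ((1 : Fin (m + 2)).succAbove j)) = Fin.cons u (xFrame μ) := by
    funext j
    cases j using Fin.cases with
    | zero => rfl
    | succ j => simp [w, Fin.succAbove_of_le_castSucc 1 j.succ (by simp [Fin.le_def])]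
  have hdp : dpVolEval w = -((-1) ^ (μ : ℕ) * u.1 μ) := by
    rw [dpVolEval_eq_single 1 fun a ha => ?_, hframe, detX_cons_xFrame]
    · simp [w, basisP, pow_succ]
    · cases a using Fin.cases with
      | zero =>
        exact mul_eq_zero_of_right _ (detX_eq_zero_of_fst_eq_zero 0 (by simp [w, basisP]))
      | succ a =>
        have ha0 : a ≠ 0 := fun h => ha (by rw [h, Fin.succ_zero_eq_one])
        obtain ⟨a, rfl⟩ := Fin.eq_succ_of_ne_zero ha0
        simp [w, xFrame, basisX]
  have hω : omegaVolEval w = 0 := omegaVolEval_eq_zero_of_tail fun b => by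
    cases b using Fin.cases <;> simp [w, basisP, xFrame, basisX]
  rw [dThetaEval_eq, hdp, hω]
  ring

theorem dThetaEval_cons_cons_xFrame (u v : PhSp m k) (hx : v.1 = 0) (hp : v.2.2.1 = 0)
    (μ : Fin (m + 1)) :
    dThetaEval (Fin.cons u (Fin.cons v (xFrame μ))) = -((-1) ^ (μ : ℕ) * omega2 u v μ) := by
  set w : Fin (m + 2) → PhSp m k := Fin.cons u (Fin.cons v (xFrame μ))
  have hdp : dpVolEval w = 0 := by
    rw [dpVolEval_eq_single 0 fun a ha => ?_]
    · rw [detX_eq_zero_of_fst_eq_zero 0 (by simp [w, hx]), mul_zero]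
    · obtain ⟨a, rfl⟩ := Fin.eq_succ_of_ne_zero ha
      cases a using Fin.cases <;> simp [w, hp, xFrame, basisX]
  have hω : omegaVolEval w = (-1) ^ (μ : ℕ) * omega2 u v μ := by
    rw [omegaVolEval_eq_of_tail fun b hb => ?_]
    · exact Matrix.det_eq_of_col_zero_of_succAbove_single μ _ _ (fun _ => rfl)
        fun r j => by simp [omegaMat, w, xFrame, basisX]
    · obtain ⟨b, rfl⟩ := Fin.eq_succ_of_ne_zero hb
      simp [w, xFrame, basisX]
  rw [dThetaEval_eq, hdp, hω]
  ring

theorem ThetaEval_cons_xFrame (p₀ : ℝ) (P₀ : Fin (m + 1) → Fin k → ℝ) (u : PhSp m k)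
    (hx : u.1 = 0) (hy : u.2.1 = 0) (μ : Fin (m + 1)) :
    ThetaEval p₀ P₀ (Fin.cons u (xFrame μ)) = (-1) ^ (μ : ℕ) * u.2.2.2.2 μ := by
  rw [ThetaEval, detX_eq_zero_of_fst_eq_zero 0 (by simpa using hx), mul_zero, sub_zero,
    Finset.sum_eq_single_of_mem 0 (Finset.mem_univ _)]
  · exact Matrix.det_eq_of_col_zero_of_succAbove_single μ _ _ (fun r => by simp [hy])
      fun r j => by simp [Fin.succ_ne_zero, xFrame, basisX]
  · intro i _ hi
    exact Matrix.det_eq_zero_of_column_eq_zero 0 fun r => by simp [Ne.symm hi, hx]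

end Contractions

section Kernel

variable {m k : ℕ} {u : PhSp m k}

theorem dpVolEval_cons_eq_zero (hx : u.1 = 0) (hp : u.2.2.1 = 0) (w : Fin (m + 1) → PhSp m k) :
    dpVolEval (Fin.cons u w) = 0 := by
  rw [dpVolEval_eq_single 0 fun a ha => ?_]
  · simp [hp]
  · exact mul_eq_zero_of_right _
      (detX_eq_zero_of_fst_eq_zero 0 (by simp [Fin.succAbove_ne_zero_zero ha, hx]))

theorem omegaVolEval_cons_eq_zero (hx : u.1 = 0) (hy : u.2.1 = 0) (hP : u.2.2.2.1 = 0)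
    (w : Fin (m + 1) → PhSp m k) : omegaVolEval (Fin.cons u w) = 0 := by
  refine Finset.sum_eq_zero fun a _ => Finset.sum_eq_zero fun b _ => ?_
  split_ifs with hab
  · rcases eq_or_ne a 0 with rfl | ha
    · rw [omegaMat_det_eq_zero (omega2_eq_zero_of_left _ hy hP), mul_zero]
    · have hb : b ≠ 0 := fun hb => ha (Fin.ext (by simpa [hb] using hab))
      obtain ⟨j, hj⟩ := Fin.exists_succAbove_eq hb.symm
      have hcol : (omegaMat (Fin.cons u w) a b).det = 0 :=
        Matrix.det_eq_zero_of_column_eq_zero j.succ fun r => by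
          simp [omegaMat, hj, Fin.succAbove_ne_zero_zero ha, hx]
      rw [hcol, mul_zero]
  · rfl

theorem dThetaEval_cons_eq_zero (hx : u.1 = 0) (hy : u.2.1 = 0) (hp : u.2.2.1 = 0)
    (hP : u.2.2.2.1 = 0) (w : Fin (m + 1) → PhSp m k) : dThetaEval (Fin.cons u w) = 0 := by
  rw [dThetaEval_eq, dpVolEval_cons_eq_zero hx hp, omegaVolEval_cons_eq_zero hx hy hP]
  simp

end Kernel

theorem mem_ker_dThetaEval_iff {m k : ℕ} (u : PhSp m k) :
    (∀ w : Fin (m + 1) → PhSp m k, dThetaEval (Fin.cons u w) = 0) ↔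
      (u.1 = 0 ∧ u.2.1 = 0 ∧ u.2.2.1 = 0 ∧ u.2.2.2.1 = 0) := by
  refine ⟨fun h => ⟨?_, ?_, ?_, ?_⟩, fun ⟨hx, hy, hp, hP⟩ => dThetaEval_cons_eq_zero hx hy hp hP⟩
  · funext μ
    simpa [dThetaEval_cons_basisP_xFrame] using h (Fin.cons basisP (xFrame μ))
  · funext i
    have h0 := h (Fin.cons (basisPP 0 i) (xFrame 0))
    rw [dThetaEval_cons_cons_xFrame _ _ rfl rfl, omega2_basisPP] at h0
    simpa using h0
  · simpa [dThetaEval_cons_basisX] using h basisX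
  · funext μ i
    have h0 := h (Fin.cons (basisY i) (xFrame μ))
    rw [dThetaEval_cons_cons_xFrame _ _ rfl rfl, omega2_basisY] at h0
    simpa using h0

theorem stmt15 (m k : ℕ) (p₀ : ℝ) (P₀ : Fin (m + 1) → Fin k → ℝ) :
    -- `ker₁ dΘ = span{∂/∂s^μ}`
    (∀ u : PhSp m k,
      (∀ w : Fin (m + 1) → PhSp m k, dThetaEval (Fin.cons u w) = 0) ↔
        (u.1 = 0 ∧ u.2.1 = 0 ∧ u.2.2.1 = 0 ∧ u.2.2.2.1 = 0)) ∧
    -- `ker₁ Θ ∩ ker₁ dΘ = {0}`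
    (∀ u : PhSp m k,
      (∀ w : Fin m → PhSp m k, ThetaEval p₀ P₀ (Fin.cons u w) = 0) →
      (∀ w : Fin (m + 1) → PhSp m k, dThetaEval (Fin.cons u w) = 0) →
      u = 0) ∧
    -- `ker₁ dΘ ≠ {0}`
    (∃ u : PhSp m k, u ≠ 0 ∧
      ∀ w : Fin (m + 1) → PhSp m k, dThetaEval (Fin.cons u w) = 0) := by
  refine ⟨mem_ker_dThetaEval_iff, fun u hΘ hdΘ => ?_, ?_⟩
  · obtain ⟨hx, hy, hp, hP⟩ := (mem_ker_dThetaEval_iff u).1 hdΘ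
    have hs : u.2.2.2.2 = 0 := funext fun μ => by
      simpa [ThetaEval_cons_xFrame p₀ P₀ u hx hy] using hΘ (xFrame μ)
    simp [Prod.ext_iff, hx, hy, hp, hP, hs]
  · refine ⟨(0, 0, 0, 0, 1), by simp [Prod.ext_iff], dThetaEval_cons_eq_zero rfl rfl rfl rfl⟩
end
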